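/- Singular value thresholding solves the nuclear-norm proximal problem: for a matrix Y ∈ ℂ^{m×n} with SVD Y = U Σ V*, and τ > 0, the matrix U D_τ(Σ) V* with D_τ(Σ) = diag(max(σ_i − τ, 0)) is the unique minimizer over W of τ‖W‖_* + (1/2)‖W − Y‖_F². -/

import Mathlib

/-!
Multiplying by the unitaries `U` and `Vᴴ` preserves both terms of the objective
`f(W) = τ ‖W‖_* + ½ ‖W - Y‖_F²`, so we may assume that `Y = Σ` is rectangular diagonal.
The nuclear norm dominates the sum of the moduli of the diagonal entries: write
`W = (W V') V'ᴴ` with `V'` diagonalising `Wᴴ W` and apply Cauchy–Schwarz column by column.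
Equality holds for rectangular diagonal matrices with nonnegative entries. Replacing `‖W‖_*` by
this lower bound makes the objective separable in the entries of `W`, and each scalar problem
`τ |z| + ½ |z - σ|²` is `1`-strongly convex with minimiser `max (σ - τ) 0`. Altogether
`f(W) ≥ f(W₀) + ½ ‖W - W₀‖_F²`, which gives both minimality and uniqueness.
-/

open Finset Complex Matrix
open scoped ComplexOrder

/-- Nuclear norm of a matrix: sum of singular values, i.e. `Re (trace √(Mᴴ M))`. -/
noncomputable def nuclearNorm {m n : Type*} [Fintype m] [Fintype n] [DecidableEq n]
    (M : Matrix m n ℂ) : ℝ :=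
  ((Matrix.posSemidef_conjTranspose_mul_self M).isHermitian.eigenvectorUnitary.1 *
    diagonal ((fun x : ℝ => (x : ℂ)) ∘ Real.sqrt ∘ (Matrix.posSemidef_conjTranspose_mul_self M).isHermitian.eigenvalues) *
    (star (Matrix.posSemidef_conjTranspose_mul_self M).isHermitian.eigenvectorUnitary :
      Matrix n n ℂ)).trace.re

/-- Squared Frobenius norm of a matrix. -/
noncomputable def frobM2 {m n : Type*} [Fintype m] [Fintype n] (M : Matrix m n ℂ) : ℝ :=
  ∑ i, ∑ j, ‖M i j‖ ^ 2

open scoped MatrixOrder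

section NuclearNorm

variable {m n : Type*} [Fintype m]

lemma sum_norm_sq_col_eq_re_conjTranspose_mul_self (M : Matrix m n ℂ) (j : n) :
    ∑ i, ‖M i j‖ ^ 2 = ((Mᴴ * M) j j).re := by
  simp only [mul_apply, conjTranspose_apply, re_sum, ← normSq_eq_norm_sq]
  exact Finset.sum_congr rfl fun i _ => by simp [normSq_apply, mul_re]

variable [Fintype n]

lemma frobM2_eq_re_trace (M : Matrix m n ℂ) : frobM2 M = (Mᴴ * M).trace.re := by
  rw [frobM2, Finset.sum_comm, trace, re_sum]
  exact Finset.sum_congr rfl fun j _ => sum_norm_sq_col_eq_re_conjTranspose_mul_self M j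

variable [DecidableEq n]

lemma nuclearNorm_eq_re_trace_sqrt (M : Matrix m n ℂ) :
    nuclearNorm M = (CFC.sqrt (Mᴴ * M)).trace.re := by
  have hM := posSemidef_conjTranspose_mul_self M
  rw [CFC.sqrt_eq_cfc, cfc_nnreal_eq_real _ _, hM.1.cfc_eq, IsHermitian.cfc,
    Unitary.conjStarAlgAut_apply, nuclearNorm]
  congr 5
  funext i
  simp [max_eq_left (hM.eigenvalues_nonneg i)]

lemma nuclearNorm_eq_sum_sqrt_eigenvalues (M : Matrix m n ℂ) :
    nuclearNorm M = ∑ j, √((posSemidef_conjTranspose_mul_self M).1.eigenvalues j) := by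
  have hV := (posSemidef_conjTranspose_mul_self M).1.eigenvectorUnitary.2
  rw [nuclearNorm, trace_mul_cycle, Unitary.star_mul_self_of_mem hV, one_mul, trace_diagonal,
    re_sum]
  rfl

end NuclearNorm

lemma CFC.sqrt_unitary_conj {A : Type*} [PartialOrder A] [Ring A] [StarRing A]
    [TopologicalSpace A] [Algebra ℝ A] [StarOrderedRing A]
    [ContinuousFunctionalCalculus ℝ A IsSelfAdjoint] [NonnegSpectrumClass ℝ A]
    [IsSemitopologicalRing A] [T2Space A] {u : A} (hu : u ∈ unitary A) {a : A} (ha : 0 ≤ a) :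
    CFC.sqrt (u * a * star u) = u * CFC.sqrt a * star u := by
  refine CFC.sqrt_unique ?_ (star_right_conjugate_nonneg (CFC.sqrt_nonneg a) u)
  calc u * CFC.sqrt a * star u * (u * CFC.sqrt a * star u)
      = u * (CFC.sqrt a * (star u * u) * CFC.sqrt a) * star u := by noncomm_ring
    _ = u * a * star u := by
      rw [Unitary.star_mul_self_of_mem hu, mul_one, CFC.sqrt_mul_sqrt_self a]

section UnitaryInvariance

variable {m n : Type*} [Fintype m] [Fintype n] [DecidableEq m]
  {U : Matrix m m ℂ} {V : Matrix n n ℂ}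

lemma conjTranspose_mul_self_unitary_mul_mul_conjTranspose (hU : U ∈ unitaryGroup m ℂ)
    (A : Matrix m n ℂ) : (U * A * Vᴴ)ᴴ * (U * A * Vᴴ) = V * (Aᴴ * A) * Vᴴ := by
  have hU' : Uᴴ * U = 1 := Unitary.star_mul_self_of_mem hU
  simp only [conjTranspose_mul, conjTranspose_conjTranspose, Matrix.mul_assoc]
  rw [← Matrix.mul_assoc Uᴴ, hU', Matrix.one_mul]

variable [DecidableEq n]

lemma frobM2_unitary_mul_mul_conjTranspose (hU : U ∈ unitaryGroup m ℂ)
    (hV : V ∈ unitaryGroup n ℂ) (A : Matrix m n ℂ) : frobM2 (U * A * Vᴴ) = frobM2 A := by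
  rw [frobM2_eq_re_trace, frobM2_eq_re_trace,
    conjTranspose_mul_self_unitary_mul_mul_conjTranspose hU, trace_mul_cycle,
    ← star_eq_conjTranspose, Unitary.star_mul_self_of_mem hV, Matrix.one_mul]

lemma nuclearNorm_unitary_mul_mul_conjTranspose (hU : U ∈ unitaryGroup m ℂ)
    (hV : V ∈ unitaryGroup n ℂ) (A : Matrix m n ℂ) :
    nuclearNorm (U * A * Vᴴ) = nuclearNorm A := by
  rw [nuclearNorm_eq_re_trace_sqrt, nuclearNorm_eq_re_trace_sqrt,
    conjTranspose_mul_self_unitary_mul_mul_conjTranspose hU, ← star_eq_conjTranspose,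
    CFC.sqrt_unitary_conj hV (posSemidef_conjTranspose_mul_self A).nonneg, trace_mul_cycle,
    Unitary.star_mul_self_of_mem hV, Matrix.one_mul]

end UnitaryInvariance

lemma Fin.sum_ite_val_eq {M : Type*} [AddCommMonoid M] {m : ℕ} (k : ℕ) (f : Fin m → M) :
    ∑ i : Fin m, (if (i : ℕ) = k then f i else 0) = if h : k < m then f ⟨k, h⟩ else 0 := by
  split_ifs with h
  · rw [Finset.sum_eq_single ⟨k, h⟩ (fun i _ hi => if_neg (fun hik => hi (Fin.ext hik)))
      (fun h' => absurd (Finset.mem_univ _) h'), if_pos rfl]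
  · exact Finset.sum_eq_zero fun i _ => if_neg fun hik : (i : ℕ) = k => h (hik ▸ i.isLt)

lemma sum_sum_ite_val_eq_mul_le_sqrt_mul_sqrt {m n : ℕ} (a : Fin m → ℝ) (b : Fin n → ℝ) :
    ∑ i : Fin m, ∑ j : Fin n, (if (i : ℕ) = (j : ℕ) then a i * b j else 0)
      ≤ √(∑ i, a i ^ 2) * √(∑ j, b j ^ 2) := by
  set c : Fin m → ℝ := fun i => if h : (i : ℕ) < n then b ⟨i, h⟩ else 0
  have hc : ∀ i : Fin m,
      ∑ j : Fin n, (if (i : ℕ) = (j : ℕ) then a i * b j else 0) = a i * c i := by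
    intro i
    simp_rw [eq_comm (a := (i : ℕ)), Fin.sum_ite_val_eq, c, mul_dite, mul_zero]
  have hc_sq : ∑ i, c i ^ 2 ≤ ∑ j, b j ^ 2 :=
    calc ∑ i, c i ^ 2
        = ∑ i : Fin m, ∑ j : Fin n, (if (i : ℕ) = (j : ℕ) then b j ^ 2 else 0) := by
          simp_rw [eq_comm (a := ((_ : Fin m) : ℕ)), Fin.sum_ite_val_eq, c, dite_pow,
            zero_pow two_ne_zero]
      _ = ∑ j : Fin n, ∑ i : Fin m, (if (i : ℕ) = (j : ℕ) then b j ^ 2 else 0) :=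
          Finset.sum_comm
      _ ≤ ∑ j, b j ^ 2 := by
          gcongr with j
          rw [Fin.sum_ite_val_eq]
          split_ifs
          exacts [le_rfl, sq_nonneg _]
  simp_rw [hc]
  exact (Real.sum_mul_le_sqrt_mul_sqrt _ a c).trans (by gcongr)

section RectDiag

variable {m n : ℕ}

def rectDiag {R : Type*} [Zero R] (d : Fin m → R) : Matrix (Fin m) (Fin n) R :=
  of fun i j => if (i : ℕ) = (j : ℕ) then d i else 0

noncomputable def diagNormSum (X : Matrix (Fin m) (Fin n) ℂ) : ℝ :=
  ∑ i : Fin m, ∑ j : Fin n, if (i : ℕ) = (j : ℕ) then ‖X i j‖ else 0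

lemma diagNormSum_mul_conjTranspose_le {l : Type*} [Fintype l] (B : Matrix (Fin m) l ℂ)
    (C : Matrix (Fin n) l ℂ) :
    diagNormSum (B * Cᴴ) ≤ ∑ k, √(∑ i, ‖B i k‖ ^ 2) * √(∑ j, ‖C j k‖ ^ 2) :=
  calc diagNormSum (B * Cᴴ)
      ≤ ∑ i : Fin m, ∑ j : Fin n, ∑ k,
          (if (i : ℕ) = (j : ℕ) then ‖B i k‖ * ‖C j k‖ else 0) := by
        unfold diagNormSum
        gcongr with i _ j _
        split_ifs
        · rw [mul_apply]
          exact (norm_sum_le _ _).trans_eq (by simp)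
        · simp
    _ = ∑ k, ∑ i : Fin m, ∑ j : Fin n,
          (if (i : ℕ) = (j : ℕ) then ‖B i k‖ * ‖C j k‖ else 0) := by
        simp_rw [Finset.sum_comm (γ := l)]
    _ ≤ _ := by
        gcongr with k
        exact sum_sum_ite_val_eq_mul_le_sqrt_mul_sqrt (fun i => ‖B i k‖) (fun j => ‖C j k‖)

lemma diagNormSum_le_nuclearNorm (X : Matrix (Fin m) (Fin n) ℂ) :
    diagNormSum X ≤ nuclearNorm X := by
  have hX := (posSemidef_conjTranspose_mul_self X).1
  set V : Matrix (Fin n) (Fin n) ℂ := hX.eigenvectorUnitary.1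
  have hV : V ∈ unitaryGroup (Fin n) ℂ := hX.eigenvectorUnitary.2
  have hdiag : (X * V)ᴴ * (X * V) = diagonal (RCLike.ofReal ∘ hX.eigenvalues) := by
    rw [← hX.conjStarAlgAut_star_eigenvectorUnitary, Unitary.conjStarAlgAut_star_apply,
      conjTranspose_mul, star_eq_conjTranspose]
    simp only [Matrix.mul_assoc]
    rfl
  have hXV : X = X * V * Vᴴ := by
    rw [Matrix.mul_assoc, ← star_eq_conjTranspose, Unitary.mul_star_self_of_mem hV,
      Matrix.mul_one]
  have hcol_XV (k : Fin n) : ∑ i, ‖(X * V) i k‖ ^ 2 = hX.eigenvalues k := by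
    rw [sum_norm_sq_col_eq_re_conjTranspose_mul_self, hdiag]
    simp
  have hcol_V (k : Fin n) : ∑ j, ‖V j k‖ ^ 2 = 1 := by
    simp [sum_norm_sq_col_eq_re_conjTranspose_mul_self, ← star_eq_conjTranspose,
      Unitary.star_mul_self_of_mem hV]
  calc diagNormSum X = diagNormSum (X * V * Vᴴ) := by rw [← hXV]
    _ ≤ ∑ k, √(∑ i, ‖(X * V) i k‖ ^ 2) * √(∑ j, ‖V j k‖ ^ 2) :=
        diagNormSum_mul_conjTranspose_le _ _
    _ = nuclearNorm X := by
        simp [hcol_XV, hcol_V, nuclearNorm_eq_sum_sqrt_eigenvalues]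

lemma nuclearNorm_rectDiag_ofReal {c : Fin m → ℝ} (hc : 0 ≤ c) :
    nuclearNorm (rectDiag (n := n) fun i => (c i : ℂ))
      = diagNormSum (rectDiag (n := n) fun i => (c i : ℂ)) := by
  set g : Fin n → ℝ := fun j => if h : (j : ℕ) < m then c ⟨j, h⟩ else 0
  have hg : 0 ≤ g := fun j => by
    unfold g
    split_ifs
    exacts [hc _, le_rfl]
  set D : Matrix (Fin m) (Fin n) ℂ := rectDiag fun i => (c i : ℂ)
  have hDD : Dᴴ * D = diagonal (fun j => (g j : ℂ)) * diagonal (fun j => (g j : ℂ)) := by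
    rw [diagonal_mul_diagonal]
    ext j k
    simp only [D, rectDiag, mul_apply, conjTranspose_apply, of_apply, diagonal_apply,
      apply_ite star, star_zero, ite_mul, zero_mul, Complex.star_def, conj_ofReal]
    rw [Fin.sum_ite_val_eq]
    by_cases hjk : j = k
    · subst hjk
      simp only [g, if_pos]
      split_ifs <;> simp
    · simp [hjk, Fin.val_ne_of_ne hjk]
  have hsqrt : CFC.sqrt (Dᴴ * D) = diagonal (fun j => (g j : ℂ)) :=
    CFC.sqrt_unique hDD.symm <|
      nonneg_iff_posSemidef.mpr (PosSemidef.diagonal fun j => by simpa using hg j)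
  rw [nuclearNorm_eq_re_trace_sqrt, hsqrt, trace_diagonal, re_sum, diagNormSum, Finset.sum_comm]
  refine Finset.sum_congr rfl fun j _ => ?_
  simp only [D, rectDiag, of_apply, g, apply_ite norm, norm_zero, Complex.norm_real,
    Real.norm_eq_abs]
  rw [Fin.sum_ite_val_eq]
  by_cases h : (j : ℕ) < m
  · simp [h, abs_of_nonneg (hc ⟨j, h⟩)]
  · simp [h]

end RectDiag

lemma norm_sub_ofReal_sq (z : ℂ) (a : ℝ) : ‖z - a‖ ^ 2 = ‖z‖ ^ 2 - 2 * a * z.re + a ^ 2 := by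
  simp only [Complex.sq_norm, normSq_apply, sub_re, sub_im, ofReal_re, ofReal_im]
  ring

lemma softThreshold_quadratic_growth {τ σ : ℝ} (hτ : 0 ≤ τ) (hσ : 0 ≤ σ) (z : ℂ) :
    τ * ‖((max (σ - τ) 0 : ℝ) : ℂ)‖ + (1 / 2) * ‖((max (σ - τ) 0 : ℝ) : ℂ) - σ‖ ^ 2
        + (1 / 2) * ‖z - (max (σ - τ) 0 : ℝ)‖ ^ 2
      ≤ τ * ‖z‖ + (1 / 2) * ‖z - σ‖ ^ 2 := by
  set d := max (σ - τ) 0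
  have hre : z.re ≤ ‖z‖ := re_le_norm z
  rw [norm_real, Real.norm_of_nonneg (le_max_right _ _), ← ofReal_sub, norm_real,
    Real.norm_eq_abs, sq_abs, norm_sub_ofReal_sq, norm_sub_ofReal_sq]
  -- the gap is `τ (‖z‖ - d) + (d - σ) (re z - d)`, and `re z ≤ ‖z‖`
  rcases le_total τ σ with h | h
  · have : d = σ - τ := max_eq_left (by linarith)
    rw [this]
    nlinarith
  · have : d = 0 := max_eq_right (by linarith)
    rw [this]
    nlinarith [norm_nonneg z]

section Objective

variable {m n : Type*} [Fintype m] [Fintype n]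

lemma frobM2_nonneg (M : Matrix m n ℂ) : 0 ≤ frobM2 M := by
  unfold frobM2
  positivity

lemma frobM2_eq_zero_iff {M : Matrix m n ℂ} : frobM2 M = 0 ↔ M = 0 := by
  simp (disch := intros; positivity)
    [frobM2, Finset.sum_eq_zero_iff_of_nonneg, ← Matrix.ext_iff]

variable [DecidableEq n]

noncomputable def proxObjective (τ : ℝ) (Y W : Matrix m n ℂ) : ℝ :=
  τ * nuclearNorm W + (1 / 2) * frobM2 (W - Y)

lemma proxObjective_unitary_mul_mul_conjTranspose [DecidableEq m] {U : Matrix m m ℂ}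
    {V : Matrix n n ℂ} (hU : U ∈ unitaryGroup m ℂ) (hV : V ∈ unitaryGroup n ℂ) (τ : ℝ)
    (Y W : Matrix m n ℂ) :
    proxObjective τ (U * Y * Vᴴ) (U * W * Vᴴ) = proxObjective τ Y W := by
  rw [proxObjective, proxObjective, ← Matrix.sub_mul, ← Matrix.mul_sub,
    nuclearNorm_unitary_mul_mul_conjTranspose hU hV, frobM2_unitary_mul_mul_conjTranspose hU hV]

end Objective

section Diagonal

variable {m n : ℕ} {τ : ℝ}

noncomputable def diagProxObjective (τ : ℝ) (Y W : Matrix (Fin m) (Fin n) ℂ) : ℝ :=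
  τ * diagNormSum W + (1 / 2) * frobM2 (W - Y)

lemma diagProxObjective_le_proxObjective (hτ : 0 ≤ τ) (Y W : Matrix (Fin m) (Fin n) ℂ) :
    diagProxObjective τ Y W ≤ proxObjective τ Y W := by
  unfold diagProxObjective proxObjective
  gcongr
  exact diagNormSum_le_nuclearNorm W

lemma proxObjective_rectDiag_ofReal {c : Fin m → ℝ} (hc : 0 ≤ c) (τ : ℝ)
    (Y : Matrix (Fin m) (Fin n) ℂ) :
    proxObjective τ Y (rectDiag fun i => (c i : ℂ))
      = diagProxObjective τ Y (rectDiag fun i => (c i : ℂ)) := by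
  rw [proxObjective, diagProxObjective, nuclearNorm_rectDiag_ofReal hc]

lemma diagProxObjective_rectDiag_quadratic_growth {σ : Fin m → ℝ} (hτ : 0 ≤ τ) (hσ : 0 ≤ σ)
    (X : Matrix (Fin m) (Fin n) ℂ) :
    diagProxObjective τ (rectDiag fun i => (σ i : ℂ))
          (rectDiag (n := n) fun i => ((max (σ i - τ) 0 : ℝ) : ℂ))
        + (1 / 2) * frobM2 (X - rectDiag fun i => ((max (σ i - τ) 0 : ℝ) : ℂ))
      ≤ diagProxObjective τ (rectDiag fun i => (σ i : ℂ)) X := by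
  simp only [diagProxObjective, diagNormSum, frobM2, Finset.mul_sum, ← Finset.sum_add_distrib]
  refine Finset.sum_le_sum fun i _ => Finset.sum_le_sum fun j _ => ?_
  by_cases h : (i : ℕ) = (j : ℕ)
  · simpa [rectDiag, h] using softThreshold_quadratic_growth hτ (hσ i) (X i j)
  · simp [rectDiag, h]

end Diagonal

lemma proxObjective_rectDiag_quadratic_growth {m n : ℕ} {τ : ℝ} {σ : Fin m → ℝ} (hτ : 0 ≤ τ)
    (hσ : 0 ≤ σ) (X : Matrix (Fin m) (Fin n) ℂ) :
    proxObjective τ (rectDiag fun i => (σ i : ℂ))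
          (rectDiag (n := n) fun i => ((max (σ i - τ) 0 : ℝ) : ℂ))
        + (1 / 2) * frobM2 (X - rectDiag fun i => ((max (σ i - τ) 0 : ℝ) : ℂ))
      ≤ proxObjective τ (rectDiag fun i => (σ i : ℂ)) X := by
  rw [proxObjective_rectDiag_ofReal (c := fun i => max (σ i - τ) 0) fun _ => le_max_right _ _]
  exact (diagProxObjective_rectDiag_quadratic_growth hτ hσ X).trans
    (diagProxObjective_le_proxObjective hτ _ X)

/-- Singular value thresholding solves the nuclear-norm proximal problem: if
`Y = U Σ V*` is an SVD of `Y` and `τ > 0`, then `W₀ = U D_τ(Σ) V*` with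
`D_τ(Σ) = diag(max (σ i - τ) 0)` is the unique minimizer of
`τ ‖W‖_* + (1/2) ‖W - Y‖_F²`. -/
theorem svt_prox {m n : ℕ}
    (Y : Matrix (Fin m) (Fin n) ℂ) (τ : ℝ) (hτ : 0 < τ)
    (U : Matrix (Fin m) (Fin m) ℂ) (V : Matrix (Fin n) (Fin n) ℂ)
    (hU : U ∈ Matrix.unitaryGroup (Fin m) ℂ) (hV : V ∈ Matrix.unitaryGroup (Fin n) ℂ)
    (σ : Fin m → ℝ) (hσ : ∀ i, 0 ≤ σ i)
    (hY : Y = U * (Matrix.of fun (i : Fin m) (j : Fin n) =>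
      if (i : ℕ) = (j : ℕ) then (σ i : ℂ) else 0) * Vᴴ) :
    let W₀ : Matrix (Fin m) (Fin n) ℂ := U * (Matrix.of fun (i : Fin m) (j : Fin n) =>
      if (i : ℕ) = (j : ℕ) then ((max (σ i - τ) 0 : ℝ) : ℂ) else 0) * Vᴴ
    (∀ W : Matrix (Fin m) (Fin n) ℂ,
      τ * nuclearNorm W₀ + (1 / 2) * frobM2 (W₀ - Y) ≤
        τ * nuclearNorm W + (1 / 2) * frobM2 (W - Y)) ∧
    (∀ W : Matrix (Fin m) (Fin n) ℂ,
      τ * nuclearNorm W + (1 / 2) * frobM2 (W - Y) =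
        τ * nuclearNorm W₀ + (1 / 2) * frobM2 (W₀ - Y) → W = W₀) := by
  intro W₀
  show (∀ W, proxObjective τ Y W₀ ≤ proxObjective τ Y W) ∧
    (∀ W, proxObjective τ Y W = proxObjective τ Y W₀ → W = W₀)
  have growth (W : Matrix (Fin m) (Fin n) ℂ) :
      proxObjective τ Y W₀ + (1 / 2) * frobM2 (W - W₀) ≤ proxObjective τ Y W := by
    have hW : W = U * (Uᴴ * W * V) * Vᴴ := by
      simp only [Matrix.mul_assoc, ← star_eq_conjTranspose, Unitary.mul_star_self_of_mem hV]
      rw [← Matrix.mul_assoc, Unitary.mul_star_self_of_mem hU, Matrix.one_mul, Matrix.mul_one]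
    rw [hY, hW, ← Matrix.sub_mul, ← Matrix.mul_sub, frobM2_unitary_mul_mul_conjTranspose hU hV,
      proxObjective_unitary_mul_mul_conjTranspose hU hV,
      proxObjective_unitary_mul_mul_conjTranspose hU hV]
    exact proxObjective_rectDiag_quadratic_growth hτ.le hσ _
  refine ⟨fun W => ?_, fun W hW => ?_⟩
  · linarith [growth W, frobM2_nonneg (W - W₀)]
  · have h := growth W
    rw [hW] at h
    refine sub_eq_zero.mp (frobM2_eq_zero_iff.mp (le_antisymm ?_ (frobM2_nonneg _)))
    linarith
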